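/- Let X be a type, Z a finite subset of X, k ≥ 1 an integer, and f : X^k → ℝ. Then Σ_{(x_1,…,x_k) ∈ Z^k} f(x_1,…,x_k) = Σ_I Σ_g f(g(B(1)),…,g(B(k))), where the outer sum is over all set partitions I of {1,…,k}, the inner sum is over all injective maps g from the set of blocks of I to Z, and B(i) denotes the block of I containing i. In particular, the sum over all k-tuples from Z decomposes as the sum over partitions of the sums over tuples of pairwise distinct elements indexed by the blocks. -/

import Mathlib

open Finset

/-- The kernel setoid of a map, with explicit decidability. -/
def tupleKer {X : Type*} {k : ℕ} (x : Fin k → X) : Setoid (Fin k) where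
  r a b := x a = x b
  iseqv := ⟨fun _ => rfl, Eq.symm, Eq.trans⟩

instance {X : Type*} [DecidableEq X] {k : ℕ} (x : Fin k → X) :
    DecidableRel (tupleKer x).r := fun a b => inferInstanceAs (Decidable (x a = x b))

lemma parts_eq_image_part {α : Type*} [DecidableEq α] [Fintype α]
    (I : Finpartition (Finset.univ : Finset α)) :
    I.parts = Finset.univ.image I.part := by
  ext t
  simp only [mem_image, mem_univ, true_and]
  constructor
  · intro ht
    obtain ⟨a, -, ha⟩ := I.part_surjOn ht
    exact ⟨a, ha⟩
  · rintro ⟨a, rfl⟩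
    exact I.part_mem.2 (mem_univ a)

lemma finpartition_eq_of_part_eq {α : Type*} [DecidableEq α] [Fintype α]
    {I J : Finpartition (Finset.univ : Finset α)} (h : ∀ a, I.part a = J.part a) :
    I = J := by
  apply Finpartition.ext
  rw [parts_eq_image_part, parts_eq_image_part]
  exact Finset.image_congr (fun a _ => h a)

lemma ofSetoid_part_eq {α : Type*} [DecidableEq α] [Fintype α]
    (s : Setoid α) [DecidableRel s.r] (a : α) (I : Finpartition (Finset.univ : Finset α))
    (h : ∀ b, s.r a b ↔ I.part a = I.part b) :
    (Finpartition.ofSetoid s).part a = I.part a := by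
  ext b
  rw [Finpartition.mem_part_ofSetoid_iff_rel, h b,
    I.mem_part_iff_part_eq_part (mem_univ b) (mem_univ a), eq_comm]

/-- Decomposition of the sum over `k`-tuples with entries in a finite set `Z` as a sum
over set partitions `I` of `{1,…,k}` of sums over injective maps `g` from the blocks
of `I` to `Z`, where the `k`-tuple induced by `g` assigns to position `i` the value of
`g` on the block containing `i`. -/
theorem sum_tuples_eq_sum_partitions_sum_injective {X : Type*} [DecidableEq X]
    (Z : Finset X) (k : ℕ) (hk : 1 ≤ k) (f : (Fin k → X) → ℝ) :
    ∑ x ∈ Fintype.piFinset (fun _ : Fin k => Z), f x =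
      ∑ I : Finpartition (Finset.univ : Finset (Fin k)),
        ∑ g ∈ Finset.univ.filter
            (fun g : {p // p ∈ I.parts} → {x // x ∈ Z} => Function.Injective g),
          f (fun i => ↑(g ⟨I.part i, I.part_mem.2 (Finset.mem_univ i)⟩)) := by
  classical
  set P : (Fin k → X) → Finpartition (Finset.univ : Finset (Fin k)) :=
    fun x => Finpartition.ofSetoid (tupleKer x) with hP
  have hrep : ∀ (x : Fin k → X) (i j : Fin k), j ∈ (P x).part i ↔ x i = x j := fun x i j =>
    Finpartition.mem_part_ofSetoid_iff_rel
  rw [← Finset.sum_fiberwise (Fintype.piFinset (fun _ : Fin k => Z)) P f]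
  refine Finset.sum_congr rfl fun I _ => ?_
  refine Finset.sum_bij'
    (i := fun x hx => fun B : {p // p ∈ I.parts} =>
      (⟨x (B.1.min' (I.nonempty_of_mem_parts B.2)),
        (Fintype.mem_piFinset.1 (Finset.mem_filter.1 hx).1) _⟩ : {x // x ∈ Z}))
    (j := fun g hg => fun i => ↑(g ⟨I.part i, I.part_mem.2 (Finset.mem_univ i)⟩))
    ?_ ?_ ?_ ?_ ?_
  · -- forward lands in the injective maps
    intro x hx
    obtain ⟨hx1, hx2⟩ := Finset.mem_filter.1 hx
    rw [Finset.mem_filter]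
    refine ⟨Finset.mem_univ _, ?_⟩
    intro B B' hBB'
    have h1 : x (B.1.min' (I.nonempty_of_mem_parts B.2)) =
        x (B'.1.min' (I.nonempty_of_mem_parts B'.2)) := congrArg Subtype.val hBB'
    have hB : I.part (B.1.min' (I.nonempty_of_mem_parts B.2)) = B.1 :=
      I.part_eq_of_mem B.2 (Finset.min'_mem _ _)
    have hB' : I.part (B'.1.min' (I.nonempty_of_mem_parts B'.2)) = B'.1 :=
      I.part_eq_of_mem B'.2 (Finset.min'_mem _ _)
    have hrepI : ∀ a b : Fin k, b ∈ I.part a ↔ x a = x b := fun a b => hx2 ▸ hrep x a b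
    have hmem : B'.1.min' (I.nonempty_of_mem_parts B'.2) ∈
        I.part (B.1.min' (I.nonempty_of_mem_parts B.2)) := (hrepI _ _).2 h1
    have h2 : I.part (B.1.min' (I.nonempty_of_mem_parts B.2)) =
        I.part (B'.1.min' (I.nonempty_of_mem_parts B'.2)) :=
      ((I.mem_part_iff_part_eq_part (Finset.mem_univ _) (Finset.mem_univ _)).1 hmem).symm
    exact Subtype.ext (hB ▸ hB' ▸ h2)
  · -- backward lands in the fiber
    intro g hg
    have hginj : Function.Injective g := (Finset.mem_filter.1 hg).2
    rw [Finset.mem_filter]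
    constructor
    · exact Fintype.mem_piFinset.2 fun i => (g _).2
    · -- the kernel partition of the induced tuple is `I`
      apply finpartition_eq_of_part_eq
      intro a
      apply ofSetoid_part_eq
      intro b
      show (↑(g ⟨I.part a, _⟩) : X) = ↑(g ⟨I.part b, _⟩) ↔ I.part a = I.part b
      constructor
      · intro h
        exact congrArg Subtype.val (hginj (Subtype.ext h))
      · intro h
        exact congrArg (fun B => (↑(g B) : X)) (Subtype.ext h)
  · -- left inverse
    intro x hx
    obtain ⟨hx1, hx2⟩ := Finset.mem_filter.1 hx
    funext i
    dsimp only
    have hrepI : ∀ a b : Fin k, b ∈ I.part a ↔ x a = x b := fun a b =>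
      hx2 ▸ hrep x a b
    have hmin : (I.part i).min' (I.nonempty_of_mem_parts (I.part_mem.2 (Finset.mem_univ i)))
        ∈ I.part i := Finset.min'_mem _ _
    exact ((hrepI i _).1 hmin).symm
  · -- right inverse
    intro g hg
    funext B
    apply Subtype.ext
    show (↑(g ⟨I.part (B.1.min' (I.nonempty_of_mem_parts B.2)), _⟩) : X) = ↑(g B)
    have hpart : I.part (B.1.min' (I.nonempty_of_mem_parts B.2)) = B.1 :=
      I.part_eq_of_mem B.2 (Finset.min'_mem _ _)
    exact congrArg (fun C => (↑(g C) : X)) (Subtype.ext hpart)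
  · -- values agree
    intro x hx
    obtain ⟨hx1, hx2⟩ := Finset.mem_filter.1 hx
    congr 1
    funext i
    dsimp only
    have hrepI : ∀ a b : Fin k, b ∈ I.part a ↔ x a = x b := fun a b =>
      hx2 ▸ hrep x a b
    have hmin : (I.part i).min' (I.nonempty_of_mem_parts (I.part_mem.2 (Finset.mem_univ i)))
        ∈ I.part i := Finset.min'_mem _ _
    exact (hrepI i _).1 hmin
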